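/- In the canonical model structure on the category of small groupoids, given a commutative square with left leg K : A ⟶ D an equivalence of categories that is injective on objects (trivial cofibration) and right leg G : B ⟶ C an isofibration, there exists a diagonal functor L : D ⟶ B making both triangles commute strictly. -/

import Mathlib

/-!
Pick a quasi-inverse `E⁻¹` of `K`. The functor `M = E⁻¹ ⋙ F` satisfies `K ⋙ M ≅ F` and
`M ⋙ G ≅ H`, so only strictness is missing. Replace each object `M d` by an isomorphic one:
for `d = K a` take `F a` (well defined since `K` is injective on objects), otherwise lift the
isomorphism `G (M d) ≅ H d` along the isofibration `G`. Conjugating `M` by these isomorphisms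
gives `L`, and both triangles commute strictly because the comparison isomorphisms of
`K ⋙ L` with `F` and of `L ⋙ G` with `H` have become identities.
-/

open CategoryTheory

/-- A functor between groupoids is an isofibration (fibration of groupoids) if every
arrow into an object of the form `G b` lifts to an arrow into `b`. -/
def IsGrpdFibration {B C : Type*} [Groupoid B] [Groupoid C] (G : B ⥤ C) : Prop :=
  ∀ (b : B) (c : C) (γ : c ⟶ G.obj b),
    ∃ (b' : B) (β : b' ⟶ b) (h : G.obj b' = c), G.map β = eqToHom h ≫ γ

lemma IsGrpdFibration.exists_iso_lift {B C : Type*} [Groupoid B] [Groupoid C] {G : B ⥤ C}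
    (hG : IsGrpdFibration G) (b : B) {c : C} (γ : G.obj b ≅ c) :
    ∃ (b' : B) (e : b ≅ b') (h : G.obj b' = c), G.map e.hom ≫ eqToHom h = γ.hom := by
  obtain ⟨b', β, h, hβ⟩ := hG b c γ.inv
  refine ⟨b', (asIso β).symm, h, ?_⟩
  simp [Functor.map_inv, hβ]

namespace CategoryTheory.Functor

variable {A B C D : Type*} [Category A] [Category B] [Category C] [Category D]

lemma copyObj_comp_eq {M : D ⥤ B} {G : B ⥤ C} {H : D ⥤ C} (α : M ⋙ G ≅ H)
    (b : D → B) (e : ∀ d, M.obj d ≅ b d) (hobj : ∀ d, G.obj (b d) = H.obj d)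
    (happ : ∀ d, G.map (e d).hom ≫ eqToHom (hobj d) = α.hom.app d) :
    M.copyObj b e ⋙ G = H :=
  ext_of_iso (isoWhiskerRight (M.isoCopyObj b e).symm G ≪≫ α) hobj fun d => by
    simp only [Iso.trans_hom, NatTrans.comp_app, isoWhiskerRight_hom, Iso.symm_hom,
      whiskerRight_app, isoCopyObj_inv_app, ← happ]
    exact (G.mapIso (e d)).inv_hom_id_assoc _

lemma comp_copyObj_eq {K : A ⥤ D} {M : D ⥤ B} {F : A ⥤ B} (θ : K ⋙ M ≅ F)
    (b : D → B) (e : ∀ d, M.obj d ≅ b d) (hobj : ∀ a, b (K.obj a) = F.obj a)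
    (happ : ∀ a, (e (K.obj a)).hom ≫ eqToHom (hobj a) = θ.hom.app a) :
    K ⋙ M.copyObj b e = F :=
  ext_of_iso (isoWhiskerLeft K (M.isoCopyObj b e).symm ≪≫ θ) hobj fun a => by
    simp only [Iso.trans_hom, NatTrans.comp_app, isoWhiskerLeft_hom, Iso.symm_hom,
      whiskerLeft_app, isoCopyObj_inv_app, ← happ]
    exact (e _).inv_hom_id_assoc _

end CategoryTheory.Functor

lemma IsGrpdFibration.exists_iso_lifts_extending {A B C D : Type*} [Category A] [Groupoid B]
    [Groupoid C] [Category D] {F : A ⥤ B} {K : A ⥤ D} {H : D ⥤ C} {G : B ⥤ C} {M : D ⥤ B}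
    (hG : IsGrpdFibration G) (hKinj : Function.Injective K.obj) (hsq : F ⋙ G = K ⋙ H)
    (α : M ⋙ G ≅ H) (θ : K ⋙ M ≅ F)
    (hθα : ∀ a, G.map (θ.hom.app a) ≫ eqToHom (Functor.congr_obj hsq a) = α.hom.app (K.obj a)) :
    ∃ (b : D → B) (e : ∀ d, M.obj d ≅ b d) (hGb : ∀ d, G.obj (b d) = H.obj d),
      (∀ d, G.map (e d).hom ≫ eqToHom (hGb d) = α.hom.app d) ∧
      ∃ hbK : ∀ a, b (K.obj a) = F.obj a,
        ∀ a, (e (K.obj a)).hom ≫ eqToHom (hbK a) = θ.hom.app a := by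
  have key : ∀ d, ∃ (b : B) (e : M.obj d ≅ b) (hGb : G.obj b = H.obj d),
      G.map e.hom ≫ eqToHom hGb = α.hom.app d ∧ ∀ a (h : K.obj a = d),
        ∃ hbK : b = F.obj a, e.hom ≫ eqToHom hbK = M.map (eqToHom h.symm) ≫ θ.hom.app a := by
    intro d
    by_cases hd : ∃ a, K.obj a = d
    · obtain ⟨a, rfl⟩ := hd
      refine ⟨F.obj a, θ.app a, Functor.congr_obj hsq a, hθα a, fun a' h => ?_⟩
      obtain rfl := hKinj h
      exact ⟨rfl, by simp⟩
    · obtain ⟨b, e, hGb, he⟩ := hG.exists_iso_lift (M.obj d) (α.app d)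
      exact ⟨b, e, hGb, he, fun a h => (hd ⟨a, h⟩).elim⟩
  choose b e hGb he hK using key
  exact ⟨b, e, hGb, he, fun a => (hK _ a rfl).1, fun a => by simpa using (hK _ a rfl).2⟩

lemma IsGrpdFibration.exists_lift_of_equivalence {A B C D : Type*} [Category A] [Groupoid B]
    [Groupoid C] [Category D] {F : A ⥤ B} {H : D ⥤ C} {G : B ⥤ C} (hG : IsGrpdFibration G)
    (E : A ≌ D) (hinj : Function.Injective E.functor.obj) (hsq : F ⋙ G = E.functor ⋙ H) :
    ∃ L : D ⥤ B, E.functor ⋙ L = F ∧ L ⋙ G = H := by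
  have hGF {x y : A} (f : x ⟶ y) : G.map (F.map f) =
      eqToHom (Functor.congr_obj hsq x) ≫ H.map (E.functor.map f) ≫
        eqToHom (Functor.congr_obj hsq y).symm :=
    Functor.congr_hom hsq f
  let M := E.inverse ⋙ F
  let α : M ⋙ G ≅ H := NatIso.ofComponents
    (fun d => eqToIso (Functor.congr_obj hsq (E.inverse.obj d)) ≪≫ H.mapIso (E.counitIso.app d))
    (fun f => by
      simp only [M, Functor.comp_map, hGF]
      simp [← H.map_comp, -Functor.map_comp])
  let θ : E.functor ⋙ M ≅ F :=
    NatIso.ofComponents (fun a => F.mapIso (E.unitIso.symm.app a)) (fun f => by simp [M])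
  have hθα (a : A) :
      G.map (θ.hom.app a) ≫ eqToHom (Functor.congr_obj hsq a) = α.hom.app (E.functor.obj a) := by
    simp [θ, α, hGF, E.counit_app_functor]
  obtain ⟨b, e, hGb, he, hbE, heE⟩ := hG.exists_iso_lifts_extending hinj hsq α θ hθα
  exact ⟨M.copyObj b e, Functor.comp_copyObj_eq θ b e hbE heE, Functor.copyObj_comp_eq α b e hGb he⟩

theorem stmt_14 {A B C D : Type*} [Groupoid A] [Groupoid B] [Groupoid C] [Groupoid D]
    (F : A ⥤ B) (K : A ⥤ D) (H : D ⥤ C) (G : B ⥤ C)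
    (hsq : F ⋙ G = K ⋙ H)
    (hKff : K.FullyFaithful) (hKes : K.EssSurj) (hKinj : Function.Injective K.obj)
    (hG : IsGrpdFibration G) :
    ∃ L : D ⥤ B, K ⋙ L = F ∧ L ⋙ G = H :=
  have : K.IsEquivalence := { faithful := hKff.faithful, full := hKff.full, essSurj := hKes }
  hG.exists_lift_of_equivalence K.asEquivalence hKinj hsq
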